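/- Let n ≥ 2 and q ≥ 2. Any edge clique cover of the Hamming graph H(n,q) of minimum size n·q^{n−1} consists of pairwise edge-disjoint cliques, each of which is a maximum clique (of size q). -/

import Mathlib

open SimpleGraph

/-- The Hamming graph H(n,q): vertices are `Fin n → Fin q`, adjacent iff Hamming distance 1. -/
def hammingGraph (n q : ℕ) : SimpleGraph (Fin n → Fin q) where
  Adj x y := hammingDist x y = 1
  symm := ⟨by intro x y h; exact (hammingDist_comm y x).trans h⟩
  loopless := ⟨by intro x h; simp [hammingDist_self] at h⟩

/-- The competition graph of a digraph `D`. -/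
def competitionGraph {V : Type*} (D : V → V → Prop) : SimpleGraph V where
  Adj u v := u ≠ v ∧ ∃ x, D u x ∧ D v x
  symm := ⟨by rintro u v ⟨h, x, hu, hv⟩; exact ⟨h.symm, x, hv, hu⟩⟩
  loopless := ⟨by rintro u ⟨h, _⟩; exact h rfl⟩

/-- A digraph is acyclic iff it has no directed cycle. -/
def IsAcyclicDigraph {V : Type*} (D : V → V → Prop) : Prop :=
  ∀ v, ¬ Relation.TransGen D v v

/-- `G` together with `k` isolated vertices. -/
def addIsolated {V : Type*} (G : SimpleGraph V) (k : ℕ) : SimpleGraph (V ⊕ Fin k) where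
  Adj x y := ∃ u v, x = Sum.inl u ∧ y = Sum.inl v ∧ G.Adj u v
  symm := ⟨by rintro x y ⟨u, v, rfl, rfl, h⟩; exact ⟨v, u, rfl, rfl, h.symm⟩⟩
  loopless := ⟨by rintro x ⟨u, v, rfl, h, hadj⟩; injection h with h; subst h; exact hadj.ne rfl⟩

/-- The competition number of a graph. -/
noncomputable def competitionNumber {V : Type*} (G : SimpleGraph V) : ℕ :=
  sInf {k | ∃ D : (V ⊕ Fin k) → (V ⊕ Fin k) → Prop,
    IsAcyclicDigraph D ∧ competitionGraph D = addIsolated G k}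

/-- The maximal clique `S_j(p)` of `H(n,q)`: all tuples agreeing with `p` off coordinate `j`. -/
def Sset {n q : ℕ} (j : Fin n) (p : Fin n → Fin q) : Set (Fin n → Fin q) :=
  {x | ∀ i, i ≠ j → x i = p i}

/-- A maximal clique of a graph. -/
def IsMaxClique {V : Type*} (G : SimpleGraph V) (S : Set V) : Prop :=
  G.IsClique S ∧ ∀ T, G.IsClique T → S ⊆ T → S = T

/-- An edge clique cover. -/
def IsEdgeCliqueCover {V : Type*} (G : SimpleGraph V) (F : Finset (Finset V)) : Prop :=
  (∀ S ∈ F, G.IsClique (S : Set V)) ∧ ∀ u v, G.Adj u v → ∃ S ∈ F, u ∈ S ∧ v ∈ S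

/-- In-neighborhood of a vertex in a digraph. -/
def inNbhd {V : Type*} (D : V → V → Prop) (v : V) : Set V := {w | D w v}

/-! Every edge of `H(n,q)` lies on exactly one line (the `q` tuples that agree off one coordinate),
two lines share at most one vertex, and every clique with an edge lies on a line. Each of the
`n q^(n-1)` lines therefore contains a member of the cover covering one of its edges, and these
members are distinct. In a cover of exactly that size they are all the members, so the member on a
line is the only one covering the edges of that line, and it must be the whole line. -/

open Finset

/-- The lines of a partial linear space whose collinearity graph is `G` and in which every clique
with an edge is collinear. -/
structure IsLineFamily {V ι : Type*} [DecidableEq V] (G : SimpleGraph V) (B : ι → Finset V) :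
    Prop where
  isClique : ∀ i, G.IsClique (B i : Set V)
  one_lt_card : ∀ i, 1 < #(B i)
  card_inter_le_one : Pairwise fun i j => #(B i ∩ B j) ≤ 1
  exists_superset : ∀ S : Finset V, G.IsClique (S : Set V) → 1 < #S → ∃ i, S ⊆ B i

namespace IsLineFamily

variable {V ι : Type*} [DecidableEq V] {G : SimpleGraph V} {B : ι → Finset V}

lemma eq_of_one_lt_card_inter (hB : IsLineFamily G B) {i j : ι} (h : 1 < #(B i ∩ B j)) :
    i = j := by
  by_contra hij
  exact (hB.card_inter_le_one hij).not_gt h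

lemma subset_of_one_lt_card_inter (hB : IsLineFamily G B) {S : Finset V}
    (hS : G.IsClique (S : Set V)) {i : ι} (h : 1 < #(S ∩ B i)) : S ⊆ B i := by
  obtain ⟨k, hk⟩ := hB.exists_superset S hS (h.trans_le (card_le_card inter_subset_left))
  obtain rfl : k = i :=
    hB.eq_of_one_lt_card_inter (h.trans_le (card_le_card (inter_subset_inter_right hk)))
  exact hk

lemma exists_injective_mem_subset (hB : IsLineFamily G B) {F : Finset (Finset V)}
    (hF : IsEdgeCliqueCover G F) :
    ∃ χ : ι → Finset V, Function.Injective χ ∧ ∀ i, χ i ∈ F ∧ χ i ⊆ B i := by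
  have hsel : ∀ i, ∃ S ∈ F, 1 < #(S ∩ B i) := by
    intro i
    obtain ⟨u, hu, v, hv, huv⟩ := Finset.one_lt_card.1 (hB.one_lt_card i)
    obtain ⟨S, hSF, huS, hvS⟩ := hF.2 u v (hB.isClique i hu hv huv)
    exact ⟨S, hSF, Finset.one_lt_card.2
      ⟨u, mem_inter.2 ⟨huS, hu⟩, v, mem_inter.2 ⟨hvS, hv⟩, huv⟩⟩
  choose χ hχF hχB using hsel
  have hχsub : ∀ i, χ i ⊆ B i := fun i =>
    hB.subset_of_one_lt_card_inter (hF.1 _ (hχF i)) (hχB i)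
  have hχcard : ∀ i, 1 < #(χ i) := fun i => (hχB i).trans_le (card_le_card inter_subset_left)
  refine ⟨χ, fun i k hik => hB.eq_of_one_lt_card_inter ?_, fun i => ⟨hχF i, hχsub i⟩⟩
  exact (hχcard i).trans_le (card_le_card (subset_inter (hχsub i) (hik ▸ hχsub k)))

theorem exists_eq_of_isEdgeCliqueCover [Fintype ι] (hB : IsLineFamily G B)
    {F : Finset (Finset V)} (hF : IsEdgeCliqueCover G F) (hcard : #F ≤ Fintype.card ι) :
    ∀ S ∈ F, ∃ i, B i = S := by
  obtain ⟨χ, hinj, hχ⟩ := hB.exists_injective_mem_subset hF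
  have himage : univ.image χ = F := eq_of_subset_of_card_le
    (image_subset_iff.2 fun i _ => (hχ i).1) (by rwa [card_image_of_injective _ hinj, card_univ])
  have hunique : ∀ T ∈ F, ∀ i, 1 < #(T ∩ B i) → T = χ i := by
    intro T hT i h
    obtain ⟨k, -, rfl⟩ := mem_image.1 (himage ▸ hT)
    rw [hB.eq_of_one_lt_card_inter
      (h.trans_le (card_le_card (inter_subset_inter_right (hχ k).2)))]
  intro S hS
  obtain ⟨i, -, rfl⟩ := mem_image.1 (himage ▸ hS)
  refine ⟨i, subset_antisymm (fun x hx => ?_) (hχ i).2⟩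
  obtain ⟨y, hy, hyx⟩ := exists_mem_ne (hB.one_lt_card i) x
  obtain ⟨T, hT, hxT, hyT⟩ := hF.2 x y (hB.isClique i hx hy hyx.symm)
  have hTi : 1 < #(T ∩ B i) :=
    Finset.one_lt_card.2 ⟨x, mem_inter.2 ⟨hxT, hx⟩, y, mem_inter.2 ⟨hyT, hy⟩, hyx.symm⟩
  exact hunique T hT i hTi ▸ hxT

end IsLineFamily

section Hamming

variable {n q : ℕ}

lemma hammingGraph_adj_iff {x y : Fin n → Fin q} :
    (hammingGraph n q).Adj x y ↔ ∃! j, x j ≠ y j := by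
  simp [hammingGraph, hammingDist, card_eq_one_iff_existsUnique]

/-- `hammingLine ⟨j, g⟩` is the line in direction `j` through the tuples extending `g`. -/
def hammingLine (l : (j : Fin n) × ({i // i ≠ j} → Fin q)) : Finset (Fin n → Fin q) :=
  univ.image fun c => (Equiv.funSplitAt l.1 (Fin q)).symm (c, l.2)

lemma mem_hammingLine {l : (j : Fin n) × ({i // i ≠ j} → Fin q)} {x : Fin n → Fin q} :
    x ∈ hammingLine l ↔ ∀ i : {i // i ≠ l.1}, x i = l.2 i := by
  rw [hammingLine, mem_image]
  constructor
  · rintro ⟨c, -, rfl⟩ i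
    simp [Equiv.funSplitAt, Equiv.piSplitAt, i.2]
  · intro h
    refine ⟨x l.1, mem_univ _, (Equiv.funSplitAt l.1 (Fin q)).symm_apply_eq.2 ?_⟩
    exact Prod.ext rfl (funext fun i => (h i).symm)

lemma card_hammingLine (l : (j : Fin n) × ({i // i ≠ j} → Fin q)) : #(hammingLine l) = q := by
  rw [hammingLine, card_image_of_injective, card_univ, Fintype.card_fin]
  intro c d h
  simpa using congrArg Prod.fst ((Equiv.funSplitAt l.1 (Fin q)).symm.injective h)

lemma card_hammingLineIndex :
    Fintype.card ((j : Fin n) × ({i // i ≠ j} → Fin q)) = n * q ^ (n - 1) := by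
  simp [Fintype.card_sigma]

lemma eq_of_mem_hammingLine {l : (j : Fin n) × ({i // i ≠ j} → Fin q)} {x y : Fin n → Fin q}
    (hx : x ∈ hammingLine l) (hy : y ∈ hammingLine l) {i : Fin n} (hxy : x i ≠ y i) :
    i = l.1 := by
  by_contra hi
  exact hxy ((mem_hammingLine.1 hx ⟨i, hi⟩).trans (mem_hammingLine.1 hy ⟨i, hi⟩).symm)

lemma isClique_hammingLine (l : (j : Fin n) × ({i // i ≠ j} → Fin q)) :
    (hammingGraph n q).IsClique (hammingLine l : Set (Fin n → Fin q)) := by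
  intro x hx y hy hne
  obtain ⟨i, hi⟩ := Function.ne_iff.1 hne
  obtain rfl := eq_of_mem_hammingLine hx hy hi
  exact hammingGraph_adj_iff.2 ⟨_, hi, fun k hk => eq_of_mem_hammingLine hx hy hk⟩

lemma card_inter_hammingLine_le_one {l l' : (j : Fin n) × ({i // i ≠ j} → Fin q)}
    (h : l ≠ l') :
    #(hammingLine l ∩ hammingLine l') ≤ 1 := by
  contrapose! h
  obtain ⟨x, hx, y, hy, hxy⟩ := Finset.one_lt_card.1 h
  rw [mem_inter] at hx hy
  obtain ⟨i, hi⟩ := Function.ne_iff.1 hxy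
  obtain ⟨j, g⟩ := l
  obtain ⟨j', g'⟩ := l'
  obtain rfl : i = j := eq_of_mem_hammingLine hx.1 hy.1 hi
  obtain rfl : i = j' := eq_of_mem_hammingLine hx.2 hy.2 hi
  obtain rfl : g = g' := funext fun k =>
    (mem_hammingLine.1 hx.1 k).symm.trans (mem_hammingLine.1 hx.2 k)
  rfl

lemma exists_subset_hammingLine {S : Finset (Fin n → Fin q)}
    (hS : (hammingGraph n q).IsClique (S : Set (Fin n → Fin q))) {u v : Fin n → Fin q}
    (hu : u ∈ S) (hv : v ∈ S) (huv : (hammingGraph n q).Adj u v) :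
    ∃ l, S ⊆ hammingLine l := by
  obtain ⟨j, hj, hj_unique⟩ := hammingGraph_adj_iff.1 huv
  refine ⟨⟨j, fun i => u i⟩, fun w hw => mem_hammingLine.2 fun ⟨i, hij⟩ => ?_⟩
  by_contra hwu
  have hwu_adj := hammingGraph_adj_iff.1 (hS hw hu fun h => hwu (h ▸ rfl))
  have hwj : w j = u j := by
    by_contra h
    exact hij (hwu_adj.unique hwu h)
  have hui : u i = v i := by
    by_contra h
    exact hij (hj_unique i h)
  have hwv : w i ≠ v i := hui ▸ hwu
  have hwv_adj := hammingGraph_adj_iff.1 (hS hw hv fun h => hwv (h ▸ rfl))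
  exact hij (hwv_adj.unique hwv (hwj ▸ hj))

theorem isLineFamily_hammingLine (hq : 2 ≤ q) : IsLineFamily (hammingGraph n q) hammingLine where
  isClique := isClique_hammingLine
  one_lt_card l := by rw [card_hammingLine]; omega
  card_inter_le_one _ _ := card_inter_hammingLine_le_one
  exists_superset S hS hcard := by
    obtain ⟨u, hu, v, hv, huv⟩ := Finset.one_lt_card.1 hcard
    exact exists_subset_hammingLine hS hu hv (hS hu hv huv)

end Hamming

theorem minimum_edge_clique_cover_structure_general (n q : ℕ) (hq : 2 ≤ q)
    (F : Finset (Finset (Fin n → Fin q)))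
    (hF : IsEdgeCliqueCover (hammingGraph n q) F) (hcard : F.card = n * q ^ (n - 1)) :
    (∀ S ∈ F, S.card = q) ∧
      ∀ S ∈ F, ∀ T ∈ F, S ≠ T → (S ∩ T).card ≤ 1 := by
  have hlines := isLineFamily_hammingLine (n := n) hq
  have hstruct := hlines.exists_eq_of_isEdgeCliqueCover hF (by rw [hcard, card_hammingLineIndex])
  refine ⟨fun S hS => ?_, fun S hS T hT hST => ?_⟩
  · obtain ⟨l, rfl⟩ := hstruct S hS
    exact card_hammingLine l
  · obtain ⟨l, rfl⟩ := hstruct S hS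
    obtain ⟨l', rfl⟩ := hstruct T hT
    exact hlines.card_inter_le_one (ne_of_apply_ne _ hST)

theorem minimum_edge_clique_cover_structure (n q : ℕ) (hn : 2 ≤ n) (hq : 2 ≤ q)
    (F : Finset (Finset (Fin n → Fin q)))
    (hF : IsEdgeCliqueCover (hammingGraph n q) F) (hcard : F.card = n * q ^ (n - 1)) :
    (∀ S ∈ F, S.card = q) ∧
      ∀ S ∈ F, ∀ T ∈ F, S ≠ T → (S ∩ T).card ≤ 1 :=
  minimum_edge_clique_cover_structure_general n q hq F hF hcard
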